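/- arXiv:2602.10045 — 2 statements merged into one kernel-verified Lean document; each statement's English description precedes it below -/
import Mathlib

section
/- Under the i.i.d. sampling assumption and the feasibility assumption μ_τ({1,…,k}) > 1−α, the probability that Algorithm 1 selects an under-covering parameter set tends to zero: lim_{n→∞} P( J^{(n)} ∈ 𝒜^c ) = 0, where 𝒜^c = {J ⊆ {1,…,k} : μ_τ(J) < 1−α}. -/
open MeasureTheory ProbabilityTheory Filter
open scoped Classical

/-- A binary mask on a `W × H` grid: `true` encodes the value 1. -/
abbrev Mask (W H : ℕ) := Fin W × Fin H → Bool

/-- Intersection-over-Union of two binary masks, with the convention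
`IoU A B = 1` when the union is empty. -/
noncomputable def IoU {W H : ℕ} (A B : Mask W H) : ℝ :=
  if (Finset.univ.filter (fun p : Fin W × Fin H => A p = true ∨ B p = true)).card = 0 then 1
  else ((Finset.univ.filter (fun p : Fin W × Fin H => A p = true ∧ B p = true)).card : ℝ) /
    ((Finset.univ.filter (fun p : Fin W × Fin H => A p = true ∨ B p = true)).card : ℝ)

variable {𝒳 : Type*} [MeasurableSpace 𝒳] {W H k : ℕ}

/-- `μ_τ(J)`: the probability under the law `P` that some parameter index `j ∈ J`
produces a mask with `IoU` exceeding `τ` against the true mask. -/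
noncomputable def muTau (P : Measure (𝒳 × Mask W H)) (f : 𝒳 → Fin k → Mask W H)
    (τ : ℝ) (J : Finset (Fin k)) : ENNReal :=
  P {p | ∃ j ∈ J, τ < IoU p.2 (f p.1 j)}

/-- `Covers Z f α τ n ω J` says that the parameter set `J` covers at least a
`(1−α)` fraction of the first `n` calibration samples `Z 1 ω, …, Z n ω`:
`|⋃_{j ∈ J} S_j^{(n)}| ≥ (1−α)·n`. -/
def Covers (Z : ℕ → Ω → 𝒳 × Mask W H) (f : 𝒳 → Fin k → Mask W H) (α τ : ℝ)
    (n : ℕ) (ω : Ω) (J : Finset (Fin k)) : Prop :=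
  (1 - α) * n ≤ (((Finset.Icc 1 n).filter
    (fun i => ∃ j ∈ J, τ < IoU (Z i ω).2 (f (Z i ω).1 j))).card : ℝ)

/-!
A selected set `J^{(n)}` always covers a `(1 - α)` fraction of the calibration samples. For
a fixed `J` with `μ_τ(J) < 1 - α`, the covered fraction is the empirical frequency of the event
`{∃ j ∈ J, IoU > τ}`, which by the strong law of large numbers converges almost surely to
`μ_τ(J)`; so almost surely `J` eventually stops covering, and the probability that it covers
tends to zero. A union bound over the finitely many such `J` finishes the proof.
-/

open Finset

lemma card_filter_Icc_mem_eq_sum_range_indicator {Ω E : Type*} (Z : ℕ → Ω → E) (S : Set E)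
    (n : ℕ) (ω : Ω) :
    (#{i ∈ Icc 1 n | Z i ω ∈ S} : ℝ) = ∑ i ∈ range n, (S.indicator 1 ∘ Z (i + 1)) ω := by
  rw [card_filter, Nat.cast_sum, ← Ico_add_one_right_eq_Icc, sum_Ico_eq_sum_range]
  refine sum_congr rfl fun i _ => ?_
  simp [Set.indicator_apply, add_comm 1 i]

section EmpiricalFrequency

variable {Ω E : Type*} [MeasurableSpace Ω] [MeasurableSpace E] {μ : Measure Ω}
  {P : Measure E} {Z : ℕ → Ω → E} {S : Set E}

lemma measurable_card_filter_Icc_mem (hZ : ∀ i, Measurable (Z i)) (hS : MeasurableSet S)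
    (n : ℕ) : Measurable fun ω => (#{i ∈ Icc 1 n | Z i ω ∈ S} : ℝ) := by
  simp_rw [card_filter_Icc_mem_eq_sum_range_indicator]
  exact Finset.measurable_sum _ fun i _ => (measurable_const.indicator hS).comp (hZ _)

theorem ae_tendsto_card_filter_Icc_mem_div [IsFiniteMeasure μ] (hZ : ∀ i, Measurable (Z i))
    (hindep : Pairwise fun i j => IndepFun (Z i) (Z j) μ) (hlaw : ∀ i, μ.map (Z i) = P)
    (hS : MeasurableSet S) :
    ∀ᵐ ω ∂μ, Tendsto (fun n : ℕ => (#{i ∈ Icc 1 n | Z i ω ∈ S} : ℝ) / n) atTop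
      (nhds (P.real S)) := by
  have hg : Measurable (S.indicator (1 : E → ℝ)) := measurable_const.indicator hS
  set X : ℕ → Ω → ℝ := fun i => S.indicator 1 ∘ Z (i + 1)
  have hident : ∀ i, IdentDistrib (X i) (X 0) μ μ := fun i =>
    (IdentDistrib.mk (hZ _).aemeasurable (hZ _).aemeasurable (by rw [hlaw, hlaw])).comp hg
  have hint : Integrable (X 0) μ :=
    ((integrable_const 1).indicator hS).comp_measurable (hZ 1)
  have hmean : μ[X 0] = P.real S := by
    rw [← integral_indicator_one hS, ← hlaw 1,
      integral_map (hZ 1).aemeasurable hg.aestronglyMeasurable]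
    rfl
  have hX := strong_law_ae_real X hint
    (fun i j hij => (hindep (by omega : i + 1 ≠ j + 1)).comp hg hg) hident
  simpa only [hmean, card_filter_Icc_mem_eq_sum_range_indicator] using hX

theorem tendsto_measure_le_card_filter_Icc_mem [IsFiniteMeasure μ]
    (hZ : ∀ i, Measurable (Z i)) (hindep : Pairwise fun i j => IndepFun (Z i) (Z j) μ)
    (hlaw : ∀ i, μ.map (Z i) = P) (hS : MeasurableSet S) {c : ℝ} (hc : P.real S < c) :
    Tendsto (fun n : ℕ => μ {ω | c * n ≤ #{i ∈ Icc 1 n | Z i ω ∈ S}}) atTop (nhds 0) := by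
  have hmeas : ∀ n : ℕ, MeasurableSet {ω | c * n ≤ #{i ∈ Icc 1 n | Z i ω ∈ S}} := fun n =>
    measurableSet_le measurable_const (measurable_card_filter_Icc_mem hZ hS n)
  have heventually : ∀ᵐ ω ∂μ, ∀ᶠ n : ℕ in atTop,
      ω ∈ {ω | c * n ≤ #{i ∈ Icc 1 n | Z i ω ∈ S}} ↔ ω ∈ (∅ : Set Ω) := by
    filter_upwards [ae_tendsto_card_filter_Icc_mem_div hZ hindep hlaw hS] with ω hω
    filter_upwards [hω.eventually_lt_const hc, eventually_gt_atTop 0] with n hlt hn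
    rw [div_lt_iff₀ (Nat.cast_pos.mpr hn)] at hlt
    simpa using hlt
  simpa using tendsto_measure_of_ae_tendsto_indicator_of_isFiniteMeasure atTop
    MeasurableSet.empty hmeas heventually

end EmpiricalFrequency

section Calibration

variable {Ω : Type*} [MeasurableSpace Ω]

def hitSet (f : 𝒳 → Fin k → Mask W H) (τ : ℝ) (J : Finset (Fin k)) : Set (𝒳 × Mask W H) :=
  {p | ∃ j ∈ J, τ < IoU p.2 (f p.1 j)}

lemma measurableSet_hitSet {f : 𝒳 → Fin k → Mask W H} (hf : ∀ j, Measurable (fun x => f x j))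
    (τ : ℝ) (J : Finset (Fin k)) : MeasurableSet (hitSet f τ J) := by
  have hunion : hitSet f τ J = ⋃ j ∈ J,
      (fun p => (p.2, f p.1 j)) ⁻¹' {q : Mask W H × Mask W H | τ < IoU q.1 q.2} := by
    ext p
    simp [hitSet]
  rw [hunion]
  exact MeasurableSet.biUnion J.countable_toSet fun j _ =>
    measurable_snd.prodMk ((hf j).comp measurable_fst) (Set.toFinite _).measurableSet

theorem tendsto_measure_covers_of_muTau_lt (Pr : Measure Ω) [IsFiniteMeasure Pr]
    {P : Measure (𝒳 × Mask W H)} {f : 𝒳 → Fin k → Mask W H}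
    (hf : ∀ j, Measurable (fun x => f x j)) {α τ : ℝ} {Z : ℕ → Ω → 𝒳 × Mask W H}
    (hZ : ∀ i, Measurable (Z i)) (hindep : iIndepFun Z Pr) (hlaw : ∀ i, Pr.map (Z i) = P)
    {J : Finset (Fin k)} (hJ : muTau P f τ J < ENNReal.ofReal (1 - α)) :
    Tendsto (fun n : ℕ => Pr {ω | Covers Z f α τ n ω J}) atTop (nhds 0) := by
  have hcovers : ∀ n ω, Covers Z f α τ n ω J ↔
      (1 - α) * n ≤ #{i ∈ Icc 1 n | Z i ω ∈ hitSet f τ J} := fun n ω => by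
    rw [Covers]
    congr!
  simp_rw [hcovers]
  exact tendsto_measure_le_card_filter_Icc_mem hZ (fun i j hij => hindep.indepFun hij) hlaw
    (measurableSet_hitSet hf τ J) (ENNReal.toReal_lt_of_lt_ofReal hJ)

end Calibration

theorem algorithm1_undercover_prob_tendsto_zero_general
    {Ω : Type*} [MeasurableSpace Ω]
    (Pr : Measure Ω) [IsProbabilityMeasure Pr]
    (P : Measure (𝒳 × Mask W H))
    (f : 𝒳 → Fin k → Mask W H) (hf : ∀ j, Measurable (fun x => f x j))
    (α τ : ℝ)
    (Z : ℕ → Ω → 𝒳 × Mask W H) (hZmeas : ∀ i, Measurable (Z i))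
    (hindep : iIndepFun Z Pr)
    (hlaw : ∀ i, Measure.map (Z i) Pr = P)
    (lt : Finset (Fin k) → Finset (Fin k) → Prop)
    (Jn : ℕ → Ω → Option (Finset (Fin k)))
    (hJn : ∀ (n : ℕ) (ω : Ω) (J : Finset (Fin k)), Jn n ω = some J ↔
      (Covers Z f α τ n ω J ∧
        ∀ J' : Finset (Fin k), Covers Z f α τ n ω J' → J = J' ∨ lt J J')) :
    Tendsto (fun n : ℕ =>
        Pr {ω | ∃ J, Jn n ω = some J ∧ muTau P f τ J < ENNReal.ofReal (1 - α)})
      atTop (nhds 0) := by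
  set Bad : Finset (Finset (Fin k)) := {J | muTau P f τ J < ENNReal.ofReal (1 - α)}
  have hle_sum : ∀ n : ℕ,
      Pr {ω | ∃ J, Jn n ω = some J ∧ muTau P f τ J < ENNReal.ofReal (1 - α)}
        ≤ ∑ J ∈ Bad, Pr {ω | Covers Z f α τ n ω J} := fun n => by
    refine (measure_mono ?_).trans (measure_biUnion_finset_le Bad _)
    rintro ω ⟨J, hselected, hbad⟩
    exact Set.mem_biUnion (by simpa [Bad] using hbad) ((hJn n ω J).mp hselected).1
  have hsum : Tendsto (fun n : ℕ => ∑ J ∈ Bad, Pr {ω | Covers Z f α τ n ω J}) atTop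
      (nhds 0) := by
    simpa using tendsto_finsetSum Bad fun J hJ =>
      tendsto_measure_covers_of_muTau_lt Pr hf hZmeas hindep hlaw (mem_filter.mp hJ).2
  exact tendsto_of_tendsto_of_tendsto_of_le_of_le tendsto_const_nhds hsum
    (fun _ => zero_le) hle_sum

/-- Under i.i.d. sampling and the feasibility assumption
`μ_τ({1,…,k}) > 1−α`, the probability that Algorithm 1 selects an under-covering
parameter set (`μ_τ(J^{(n)}) < 1−α`) tends to zero. -/
theorem algorithm1_undercover_prob_tendsto_zero
    (hk : 1 ≤ k) {Ω : Type*} [MeasurableSpace Ω]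
    (Pr : Measure Ω) [IsProbabilityMeasure Pr]
    (P : Measure (𝒳 × Mask W H)) [IsProbabilityMeasure P]
    (f : 𝒳 → Fin k → Mask W H) (hf : ∀ j, Measurable (fun x => f x j))
    (α τ : ℝ) (hα : α ∈ Set.Ioo (0:ℝ) 1) (hτ : τ ∈ Set.Ioo (0:ℝ) 1)
    (Z : ℕ → Ω → 𝒳 × Mask W H) (hZmeas : ∀ i, Measurable (Z i))
    (hindep : iIndepFun Z Pr)
    (hlaw : ∀ i, Measure.map (Z i) Pr = P)
    (hfeas : ENNReal.ofReal (1 - α) < muTau P f τ (Finset.univ : Finset (Fin k)))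
    (lt : Finset (Fin k) → Finset (Fin k) → Prop)
    (hlto : IsStrictTotalOrder (Finset (Fin k)) lt)
    (hltcard : ∀ J J' : Finset (Fin k), J.card < J'.card → lt J J')
    (Jn : ℕ → Ω → Option (Finset (Fin k)))
    (hJn : ∀ (n : ℕ) (ω : Ω) (J : Finset (Fin k)), Jn n ω = some J ↔
      (Covers Z f α τ n ω J ∧
        ∀ J' : Finset (Fin k), Covers Z f α τ n ω J' → J = J' ∨ lt J J')) :
    Tendsto (fun n : ℕ =>
        Pr {ω | ∃ J, Jn n ω = some J ∧ muTau P f τ J < ENNReal.ofReal (1 - α)})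
      atTop (nhds 0) :=
  algorithm1_undercover_prob_tendsto_zero_general Pr P f hf α τ Z hZmeas hindep hlaw lt Jn hJn
end

section
/- Under the i.i.d. sampling assumption, the deterministic tie-breaking order, and the strict-feasibility assumption that 𝒜 is nonempty and μ_τ(J*) > 1−α (where J* is the ≺-least element of 𝒜), the parameter set selected by Algorithm 1 converges to the population-optimal set: lim_{n→∞} P( J^{(n)} = J* ) = 1. -/
/-!
For a fixed candidate set `J`, the events "some `j ∈ J` reaches IoU above `τ` on the `i`-th
calibration sample" are i.i.d. with probability `μ_τ(J)`, so by the strong law of large numbers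
the empirical coverage of `J` tends to `μ_τ(J)` almost surely, and, there being finitely many `J`,
almost surely for all `J` at once. On that event strict feasibility makes `J*` empirically
feasible for all large `n`, while every `J` not after `J*` has `μ_τ(J) < 1 − α` by minimality of
`J*` and is eventually empirically infeasible. Hence `J^{(n)} = J*` eventually, almost surely,
and continuity of measure from below turns this into `P(J^{(n)} = J*) → 1`.
-/

open MeasureTheory ProbabilityTheory Filter
open scoped Classical

variable {𝒳 : Type*} [MeasurableSpace 𝒳] {W H k : ℕ}

open Topology Finset

theorem Finset.Icc_one_eq_map_range (n : ℕ) : Icc 1 n = (range n).map (addRightEmbedding 1) := by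
  rw [range_eq_Ico, map_add_right_Ico, zero_add, Ico_add_one_right_eq_Icc]

theorem ENNReal.lt_toReal_of_ofReal_lt {a : ℝ} {b : ENNReal} (hb : b ≠ ⊤)
    (h : ENNReal.ofReal a < b) : a < b.toReal :=
  (ENNReal.ofReal_lt_ofReal_iff'.1 (by rwa [ENNReal.ofReal_toReal hb])).1

section

theorem eventually_mul_le_of_lt_tendsto_div {u : ℕ → ℝ} {a b : ℝ}
    (hu : Tendsto (fun n : ℕ => u n / n) atTop (𝓝 b)) (hab : a < b) :
    ∀ᶠ n : ℕ in atTop, a * n ≤ u n := by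
  filter_upwards [hu.eventually (lt_mem_nhds hab), eventually_gt_atTop 0] with n hn hn0
  exact ((lt_div_iff₀ (by exact_mod_cast hn0)).1 hn).le

theorem eventually_lt_mul_of_tendsto_div_lt {u : ℕ → ℝ} {a b : ℝ}
    (hu : Tendsto (fun n : ℕ => u n / n) atTop (𝓝 b)) (hba : b < a) :
    ∀ᶠ n : ℕ in atTop, u n < a * n := by
  filter_upwards [hu.eventually (gt_mem_nhds hba), eventually_gt_atTop 0] with n hn hn0
  exact (div_lt_iff₀ (by exact_mod_cast hn0)).1 hn

variable {Ω β : Type*} [MeasurableSpace Ω] [MeasurableSpace β]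

theorem ae_tendsto_card_filter_mem_div {μ : Measure Ω} [IsFiniteMeasure μ] {ν : Measure β}
    {Z : ℕ → Ω → β} (hZ : ∀ i, Measurable (Z i)) (hindep : iIndepFun Z μ)
    (hlaw : ∀ i, μ.map (Z i) = ν) {E : Set β} (hE : MeasurableSet E) :
    ∀ᵐ ω ∂μ, Tendsto (fun n : ℕ => (#{i ∈ Icc 1 n | Z i ω ∈ E} : ℝ) / n) atTop
      (𝓝 (ν.real E)) := by
  set g : β → ℝ := E.indicator 1
  have hg : Measurable g := measurable_const.indicator hE
  have hcount : ∀ n ω,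
      (#{i ∈ Icc 1 n | Z i ω ∈ E} : ℝ) = ∑ i ∈ range n, g (Z (i + 1) ω) := by
    intro n ω
    rw [natCast_card_filter, Icc_one_eq_map_range, sum_map]
    simp [g, Set.indicator_apply]
  have hint : Integrable (g ∘ Z 1) μ :=
    ((integrable_const 1).indicator hE).comp_measurable (hZ 1)
  have hident : ∀ i, IdentDistrib (g ∘ Z (i + 1)) (g ∘ Z (0 + 1)) μ μ := fun i =>
    (IdentDistrib.mk (hZ _).aemeasurable (hZ _).aemeasurable (by rw [hlaw, hlaw])).comp hg
  have hmean : μ[g ∘ Z 1] = ν.real E := by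
    rw [← hlaw 1]
    exact (integral_map (hZ 1).aemeasurable hg.aestronglyMeasurable).symm.trans
      (integral_indicator_one hE)
  have hslln := strong_law_ae_real (fun i => g ∘ Z (i + 1)) hint
    (fun i j hij => (hindep.indepFun (by omega)).comp hg hg) hident
  simp only [zero_add, hmean] at hslln
  simpa only [hcount, Function.comp_apply] using hslln

theorem tendsto_measure_of_ae_eventually_mem {μ : Measure Ω} [IsProbabilityMeasure μ]
    {A : ℕ → Set Ω} (h : ∀ᵐ ω ∂μ, ∀ᶠ n in atTop, ω ∈ A n) :
    Tendsto (fun n => μ (A n)) atTop (𝓝 1) := by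
  set B : ℕ → Set Ω := fun n => ⋂ m ≥ n, A m
  have hB : Monotone B := fun n n' hn =>
    Set.biInter_mono (fun m hm => le_trans hn hm) fun _ _ => le_rfl
  have hunion : μ (⋃ n, B n) = 1 := by
    refine (measure_congr (ae_eq_univ.2 ?_)).trans measure_univ
    refine ae_iff.1 (h.mono fun ω hω => ?_)
    simpa [B] using eventually_atTop.1 hω
  refine tendsto_of_tendsto_of_tendsto_of_le_of_le (hunion ▸ tendsto_measure_iUnion_atTop hB)
    tendsto_const_nhds (fun n => measure_mono (Set.biInter_subset_of_mem le_rfl))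
    fun n => prob_le_one

end

def iouHitSet (f : 𝒳 → Fin k → Mask W H) (τ : ℝ) (J : Finset (Fin k)) :
    Set (𝒳 × Mask W H) :=
  {p | ∃ j ∈ J, τ < IoU p.2 (f p.1 j)}

theorem measurableSet_iouHitSet {f : 𝒳 → Fin k → Mask W H}
    (hf : ∀ j, Measurable (fun x => f x j)) (τ : ℝ) (J : Finset (Fin k)) :
    MeasurableSet (iouHitSet f τ J) := by
  have hIoU : ∀ j, Measurable fun p : 𝒳 × Mask W H => IoU p.2 (f p.1 j) := fun j =>
    (measurable_of_countable fun q : Mask W H × Mask W H => IoU q.1 q.2).comp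
      (measurable_snd.prodMk ((hf j).comp measurable_fst))
  have hunion : iouHitSet f τ J = ⋃ j ∈ J, {p | τ < IoU p.2 (f p.1 j)} := by
    ext p
    simp [iouHitSet]
  rw [hunion]
  exact J.measurableSet_biUnion fun j _ => measurableSet_lt measurable_const (hIoU j)

theorem algorithm1_selects_optimal_set_general
    {Ω : Type*} [MeasurableSpace Ω]
    (Pr : Measure Ω) [IsProbabilityMeasure Pr]
    (P : Measure (𝒳 × Mask W H)) [IsProbabilityMeasure P]
    (f : 𝒳 → Fin k → Mask W H) (hf : ∀ j, Measurable (fun x => f x j))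
    (α τ : ℝ)
    (Z : ℕ → Ω → 𝒳 × Mask W H) (hZmeas : ∀ i, Measurable (Z i))
    (hindep : iIndepFun Z Pr)
    (hlaw : ∀ i, Measure.map (Z i) Pr = P)
    (lt : Finset (Fin k) → Finset (Fin k) → Prop)
    (Jstar : Finset (Fin k))
    (hJstarLeast : ∀ J : Finset (Fin k),
      ENNReal.ofReal (1 - α) ≤ muTau P f τ J → Jstar = J ∨ lt Jstar J)
    (hJstarStrict : ENNReal.ofReal (1 - α) < muTau P f τ Jstar)
    (Jn : ℕ → Ω → Option (Finset (Fin k)))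
    (hJn : ∀ (n : ℕ) (ω : Ω) (J : Finset (Fin k)), Jn n ω = some J ↔
      (Covers Z f α τ n ω J ∧
        ∀ J' : Finset (Fin k), Covers Z f α τ n ω J' → J = J' ∨ lt J J')) :
    Tendsto (fun n : ℕ => Pr {ω | Jn n ω = some Jstar}) atTop (nhds 1) := by
  have hfreq : ∀ᵐ ω ∂Pr, ∀ J, Tendsto (fun n : ℕ =>
      (#{i ∈ Icc 1 n | ∃ j ∈ J, τ < IoU (Z i ω).2 (f (Z i ω).1 j)} : ℝ) / n) atTop
      (𝓝 (muTau P f τ J).toReal) := by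
    refine ae_all_iff.2 fun J => ?_
    filter_upwards [ae_tendsto_card_filter_mem_div hZmeas hindep hlaw
      (measurableSet_iouHitSet hf τ J)] with ω hω
    -- the two filters agree up to their `Decidable` instances
    convert hω <;> rfl
  refine tendsto_measure_of_ae_eventually_mem ?_
  filter_upwards [hfreq] with ω hω
  have hstar : ∀ᶠ n in atTop, Covers Z f α τ n ω Jstar :=
    (eventually_mul_le_of_lt_tendsto_div (hω Jstar)
      (ENNReal.lt_toReal_of_ofReal_lt (measure_ne_top P _) hJstarStrict))
  have hothers :
      ∀ᶠ n in atTop, ∀ J, Covers Z f α τ n ω J → Jstar = J ∨ lt Jstar J := by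
    refine eventually_all.2 fun J => ?_
    by_cases hJ : Jstar = J ∨ lt Jstar J
    · exact Eventually.of_forall fun _ _ => hJ
    have hinfeas : (muTau P f τ J).toReal < 1 - α :=
      ENNReal.toReal_lt_of_lt_ofReal (not_le.1 fun h => hJ (hJstarLeast J h))
    filter_upwards [eventually_lt_mul_of_tendsto_div_lt (hω J) hinfeas] with n hn hcov
    exact absurd hcov (not_le.2 hn)
  filter_upwards [hstar, hothers] with n hcov hleast
  exact (hJn n ω Jstar).2 ⟨hcov, hleast⟩

/-- Under i.i.d. sampling, deterministic tie-breaking, and strict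
feasibility (`𝒜 = {J : μ_τ(J) ≥ 1−α}` is nonempty with `≺`-least element `J*`
satisfying `μ_τ(J*) > 1−α`), the parameter set selected by Algorithm 1 converges
to the population-optimal set: `P(J^{(n)} = J*) → 1`. -/
theorem algorithm1_selects_optimal_set
    (hk : 1 ≤ k) {Ω : Type*} [MeasurableSpace Ω]
    (Pr : Measure Ω) [IsProbabilityMeasure Pr]
    (P : Measure (𝒳 × Mask W H)) [IsProbabilityMeasure P]
    (f : 𝒳 → Fin k → Mask W H) (hf : ∀ j, Measurable (fun x => f x j))
    (α τ : ℝ) (hα : α ∈ Set.Ioo (0:ℝ) 1) (hτ : τ ∈ Set.Ioo (0:ℝ) 1)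
    (Z : ℕ → Ω → 𝒳 × Mask W H) (hZmeas : ∀ i, Measurable (Z i))
    (hindep : iIndepFun Z Pr)
    (hlaw : ∀ i, Measure.map (Z i) Pr = P)
    (lt : Finset (Fin k) → Finset (Fin k) → Prop)
    (hlto : IsStrictTotalOrder (Finset (Fin k)) lt)
    (hltcard : ∀ J J' : Finset (Fin k), J.card < J'.card → lt J J')
    (Jstar : Finset (Fin k))
    (hJstarMem : ENNReal.ofReal (1 - α) ≤ muTau P f τ Jstar)
    (hJstarLeast : ∀ J : Finset (Fin k),
      ENNReal.ofReal (1 - α) ≤ muTau P f τ J → Jstar = J ∨ lt Jstar J)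
    (hJstarStrict : ENNReal.ofReal (1 - α) < muTau P f τ Jstar)
    (Jn : ℕ → Ω → Option (Finset (Fin k)))
    (hJn : ∀ (n : ℕ) (ω : Ω) (J : Finset (Fin k)), Jn n ω = some J ↔
      (Covers Z f α τ n ω J ∧
        ∀ J' : Finset (Fin k), Covers Z f α τ n ω J' → J = J' ∨ lt J J')) :
    Tendsto (fun n : ℕ => Pr {ω | Jn n ω = some Jstar}) atTop (nhds 1) :=
  algorithm1_selects_optimal_set_general Pr P f hf α τ Z hZmeas hindep hlaw lt Jstar hJstarLeast
    hJstarStrict Jn hJn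
end
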